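/- arXiv:1902.01902 — 3 statements merged into one kernel-verified Lean document; each statement's English description precedes it below -/
import Mathlib

section
/- Let α > 1 and suppose the posterior π(·|X_n) converges weakly to δ_{θ0}, P_{θ0}-almost surely. Let {q_n} be a sequence of probability distributions converging weakly to a countable mixture of Dirac measures Σ_{i=1}^∞ w^i δ_{θ_i}, where the points θ_i ∈ Θ are distinct, θ_j = θ0 for exactly one index j, θ_i ≠ θ0 for i ≠ j, and the weights satisfy w^i ∈ (0,1) with Σ_{i=1}^∞ w^i = 1. Then liminf_{n→∞} D_α(π(·|X_n) ‖ q_n) ≥ 2(1 − w^j)² > 0, P_{θ0}-almost surely. -/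
open MeasureTheory Filter Real
open scoped BoundedContinuousFunction NNReal ENNReal Topology

-- The `α`-Rényi divergence between two probability measures on `ℝ`, taking the value `+∞`
-- when `P` is not absolutely continuous with respect to `Q` or when the defining integral
-- diverges.
open scoped Classical in
noncomputable def renyiDivM (α : ℝ) (P Q : Measure ℝ) : EReal :=
  if P ≪ Q ∧ Integrable (fun θ => ((P.rnDeriv Q) θ).toReal ^ α) Q then
    (((α - 1)⁻¹ * Real.log (∫ θ, ((P.rnDeriv Q) θ).toReal ^ α ∂Q) : ℝ) : EReal)
  else ⊤

/-- Weak convergence of a sequence of measures on `ℝ`: convergence of integrals of all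
bounded continuous functions. -/
def WeakTendsto (μ : ℕ → Measure ℝ) (ν : Measure ℝ) : Prop :=
  ∀ f : ℝ →ᵇ ℝ, Tendsto (fun n => ∫ x, f x ∂(μ n)) atTop (𝓝 (∫ x, f x ∂ν))

lemma renyi_lb (α : ℝ) (hα : 1 < α) (P Q : Measure ℝ) [IsProbabilityMeasure P]
    [IsProbabilityMeasure Q] (A : Set ℝ) (hA : MeasurableSet A) (pA qA : ℝ)
    (hp0 : 0 < pA) (hp : pA ≤ (P A).toReal) (hq : (Q A).toReal ≤ qA) :
    ((α / (α - 1) * Real.log pA - Real.log qA : ℝ) : EReal) ≤ renyiDivM α P Q := by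
  rw [renyiDivM]
  split_ifs with h
  · obtain ⟨hac, hint⟩ := h
    rw [EReal.coe_le_coe_iff]
    set f := P.rnDeriv Q with hf
    have hα0 : (0:ℝ) < α := by linarith
    have hα1 : (0:ℝ) < α - 1 := by linarith
    have hf_meas : Measurable f := Measure.measurable_rnDeriv P Q
    have hae : ∀ᵐ x ∂Q, f x < ⊤ := Measure.rnDeriv_lt_top P Q
    have key : ∀ᵐ x ∂Q, ENNReal.ofReal ((f x).toReal ^ α) = f x ^ α := by
      filter_upwards [hae] with x hx
      rw [ENNReal.toReal_rpow, ENNReal.ofReal_toReal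
        (ENNReal.rpow_lt_top_of_nonneg (le_of_lt hα0) hx.ne).ne]
    set I := ∫⁻ x, f x ^ α ∂Q with hI
    have hnonneg : (0:ℝ → ℝ) ≤ᶠ[ae Q] fun x => (f x).toReal ^ α :=
      Filter.Eventually.of_forall fun x => Real.rpow_nonneg ENNReal.toReal_nonneg α
    have hintegral : ∫ x, (f x).toReal ^ α ∂Q = I.toReal := by
      rw [integral_eq_lintegral_of_nonneg_ae hnonneg hint.aestronglyMeasurable,
        lintegral_congr_ae key]
    have hI_fin : I ≠ ⊤ := by
      rw [hI, ← lintegral_congr_ae key]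
      have := hint.2
      rw [HasFiniteIntegral] at this
      refine ne_of_lt (lt_of_le_of_lt (le_of_eq ?_) this)
      refine lintegral_congr fun x => ?_
      rw [← ofReal_norm, Real.norm_of_nonneg (Real.rpow_nonneg ENNReal.toReal_nonneg α)]
    -- Hölder
    have hconj := Real.HolderConjugate.conjExponent hα
    set g : ℝ → ℝ≥0∞ := A.indicator (fun _ => (1:ℝ≥0∞)) with hg
    have hg_meas : Measurable g := measurable_const.indicator hA
    have hH := ENNReal.lintegral_mul_le_Lp_mul_Lq Q hconj hf_meas.aemeasurable hg_meas.aemeasurable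
    have hlhs : ∫⁻ x, (f * g) x ∂Q = P A := by
      have : ∀ x, (f * g) x = A.indicator f x := by
        intro x
        by_cases hx : x ∈ A <;>
          simp [hg, Set.indicator_of_mem, Set.indicator_of_notMem, hx]
      rw [lintegral_congr this, lintegral_indicator hA, Measure.setLIntegral_rnDeriv hac A]
    have hrhs2 : ∫⁻ x, g x ^ α.conjExponent ∂Q = Q A := by
      have hq0 : α.conjExponent ≠ 0 := hconj.symm.ne_zero
      have : ∀ x, g x ^ α.conjExponent = g x := by
        intro x
        by_cases hx : x ∈ A <;>
          simp [hg, Set.indicator_of_mem, Set.indicator_of_notMem, hx,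
            ENNReal.zero_rpow_of_pos hconj.symm.pos]
      rw [lintegral_congr this, hg, lintegral_indicator hA]
      simp
    rw [hlhs, hrhs2] at hH
    -- to reals
    have hIne : I ^ (1/α) ≠ ⊤ := (ENNReal.rpow_lt_top_of_nonneg (by positivity) hI_fin).ne
    have hQne : (Q A) ^ (1/α.conjExponent) ≠ ⊤ :=
      (ENNReal.rpow_lt_top_of_nonneg (one_div_nonneg.mpr hconj.symm.pos.le) (measure_ne_top Q A)).ne
    have hreal : (P A).toReal ≤ I.toReal ^ (1/α) * (Q A).toReal ^ (1/α.conjExponent) := by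
      rw [ENNReal.toReal_rpow, ENNReal.toReal_rpow, ← ENNReal.toReal_mul]
      exact ENNReal.toReal_mono (ENNReal.mul_ne_top hIne hQne) hH
    set i := I.toReal
    set p := (P A).toReal
    set qq := (Q A).toReal
    have hp' : 0 < p := lt_of_lt_of_le hp0 hp
    have hi0 : 0 ≤ i := ENNReal.toReal_nonneg
    have hqq0 : 0 ≤ qq := ENNReal.toReal_nonneg
    have hi : 0 < i := by
      rcases hi0.lt_or_eq with h' | h'
      · exact h'
      · exfalso; rw [← h', Real.zero_rpow (by positivity), zero_mul] at hreal; linarith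
    have hqq : 0 < qq := by
      rcases hqq0.lt_or_eq with h' | h'
      · exact h'
      · exfalso
        rw [← h', Real.zero_rpow (one_div_ne_zero hconj.symm.pos.ne'), mul_zero] at hreal; linarith
    have hc : 1/α.conjExponent = (α-1)/α := by
      rw [Real.conjExponent, one_div_div]
    have hlog : Real.log p ≤ (1/α) * Real.log i + ((α-1)/α) * Real.log qq := by
      calc Real.log p ≤ Real.log (i ^ (1/α) * qq ^ (1/α.conjExponent)) :=
            Real.log_le_log hp' hreal
        _ = (1/α) * Real.log i + (1/α.conjExponent) * Real.log qq := by
            rw [Real.log_mul (Real.rpow_pos_of_pos hi _).ne' (Real.rpow_pos_of_pos hqq _).ne',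
              Real.log_rpow hi, Real.log_rpow hqq]
        _ = (1/α) * Real.log i + ((α-1)/α) * Real.log qq := by rw [hc]
    have hlogp : Real.log pA ≤ Real.log p := Real.log_le_log hp0 hp
    have hlogq : Real.log qq ≤ Real.log qA := Real.log_le_log hqq hq
    have hlog' : α * Real.log p ≤ Real.log i + (α - 1) * Real.log qq := by
      have h' := mul_le_mul_of_nonneg_left hlog hα0.le
      calc α * Real.log p ≤ α * (1/α * Real.log i + (α-1)/α * Real.log qq) := h'
        _ = Real.log i + (α-1) * Real.log qq := by field_simp
    have h1 : α * Real.log pA - (α-1) * Real.log qA ≤ Real.log i := by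
      linarith [mul_le_mul_of_nonneg_left hlogp hα0.le,
        mul_le_mul_of_nonneg_left hlogq hα1.le]
    have h2 := mul_le_mul_of_nonneg_left h1 (le_of_lt (inv_pos.mpr hα1))
    rw [hintegral]
    calc α / (α - 1) * Real.log pA - Real.log qA
        = (α-1)⁻¹ * (α * Real.log pA - (α-1) * Real.log qA) := by
          field_simp
          try ring
      _ ≤ (α-1)⁻¹ * Real.log i := h2
  · exact le_top

lemma two_sq_le_neg_log {x : ℝ} (hx0 : 0 < x) (hx1 : x ≤ 1) :
    2 * (1 - x) ^ 2 ≤ - Real.log x := by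
  set F : ℝ → ℝ := fun y => - Real.log y - 2 * (1 - y) ^ 2 with hF
  have hd : ∀ y : ℝ, 0 < y → HasDerivAt F (-y⁻¹ + 4 * (1 - y)) y := by
    intro y hy
    have h1 : HasDerivAt (fun y : ℝ => Real.log y) y⁻¹ y := Real.hasDerivAt_log hy.ne'
    have h2 : HasDerivAt (fun y : ℝ => 2 * (1 - y) ^ 2) (2 * (2 * (1 - y) ^ 1 * (-1))) y := by
      have : HasDerivAt (fun y : ℝ => (1 - y)) (-1) y := by
        simpa using (hasDerivAt_id y).const_sub 1
      exact (this.pow 2).const_mul 2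
    have := h1.neg.sub h2
    exact this.congr_deriv (by ring)
  have hmono : AntitoneOn F (Set.Icc x 1) := by
    apply antitoneOn_of_deriv_nonpos (convex_Icc x 1)
    · apply ContinuousOn.sub
      · exact (Real.continuousOn_log.mono (by
          intro y hy
          simp only [Set.mem_compl_iff, Set.mem_singleton_iff]
          exact (lt_of_lt_of_le hx0 hy.1).ne')).neg
      · fun_prop
    · intro y hy
      rw [interior_Icc] at hy
      exact ((hd y (lt_trans hx0 hy.1)).differentiableAt).differentiableWithinAt
    · intro y hy
      rw [interior_Icc] at hy
      have hy0 : 0 < y := lt_trans hx0 hy.1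
      rw [(hd y hy0).deriv]
      have h4 : 4 * y * (1 - y) ≤ 1 := by nlinarith [sq_nonneg (2 * y - 1)]
      have : -y⁻¹ + 4 * (1 - y) = (4 * y * (1 - y) - 1) / y := by field_simp; ring
      rw [this]
      apply div_nonpos_of_nonpos_of_nonneg (by linarith) hy0.le
  have := hmono (Set.mem_Icc.mpr ⟨le_refl x, hx1⟩) (Set.mem_Icc.mpr ⟨hx1, le_refl 1⟩) hx1
  simp only [hF, Real.log_one] at this
  linarith

noncomputable def gBump (c r : ℝ) : ℝ →ᵇ ℝ :=
  BoundedContinuousFunction.ofNormedAddCommGroup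
    (fun x => max 0 (min 1 (2 - (2 / r) * dist x c)))
    (by fun_prop) 1
    (fun x => by
      rw [Real.norm_eq_abs, abs_le]
      constructor
      · linarith [le_max_left (0:ℝ) (min 1 (2 - (2 / r) * dist x c))]
      · exact max_le (by norm_num) (min_le_left _ _))

lemma gBump_nonneg (c r x : ℝ) : 0 ≤ gBump c r x := le_max_left _ _

lemma gBump_le_one (c r x : ℝ) : gBump c r x ≤ 1 :=
  max_le (by norm_num) (min_le_left _ _)

lemma gBump_eq_one {c r x : ℝ} (hr : 0 < r) (h : dist x c ≤ r / 2) : gBump c r x = 1 := by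
  have h1 : (1:ℝ) ≤ 2 - (2 / r) * dist x c := by
    have : (2 / r) * dist x c ≤ (2 / r) * (r / 2) :=
      mul_le_mul_of_nonneg_left h (by positivity)
    rw [div_mul_div_comm] at this
    have h2 : (2:ℝ) * r / (r * 2) = 1 := by
      rw [mul_comm r 2]
      exact div_self (by positivity)
    nlinarith [this]
  show max 0 (min 1 (2 - (2 / r) * dist x c)) = 1
  rw [min_eq_left h1, max_eq_right (by norm_num)]

lemma gBump_eq_zero {c r x : ℝ} (hr : 0 < r) (h : r ≤ dist x c) : gBump c r x = 0 := by
  have h1 : 2 - (2 / r) * dist x c ≤ 0 := by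
    have : (2 / r) * r ≤ (2 / r) * dist x c := mul_le_mul_of_nonneg_left h (by positivity)
    have h2 : (2 / r) * r = 2 := by field_simp
    linarith
  show max 0 (min 1 (2 - (2 / r) * dist x c)) = 0
  rw [max_eq_left]
  exact le_trans (min_le_right _ _) h1

/-- Lemma 6: if the posterior converges weakly to `δ_{θ0}` a.s. and `q_n` converges
weakly to a countable mixture of Dirac measures `∑ w^i δ_{θ_i}` with `θ_j = θ0`, then the
`α`-Rényi divergence from the posterior to `q_n` has liminf at least `2(1 - w^j)² > 0`,
`P_{θ0}`-a.s. -/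
theorem renyi_divergence_liminf_of_dirac_mixture_limit
    {Ω : Type*} [MeasurableSpace Ω] (P : Measure Ω) [IsProbabilityMeasure P]
    (θ0 : ℝ)
    -- the posterior distributions, converging weakly to δ_{θ0}, P_{θ0}-a.s.
    (postM : ℕ → Ω → Measure ℝ) (hpost_prob : ∀ n ω, IsProbabilityMeasure (postM n ω))
    (hpost_weak : ∀ᵐ ω ∂P, WeakTendsto (fun n => postM n ω) (Measure.dirac θ0))
    (α : ℝ) (hα : 1 < α)
    -- the mixture weights and distinct atoms
    (w : ℕ → ℝ) (hw : ∀ i, 0 < w i ∧ w i < 1) (hwsum : ∑' i, w i = 1)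
    (θs : ℕ → ℝ) (hθs_inj : Function.Injective θs)
    (j : ℕ) (hθj : θs j = θ0) (hθne : ∀ i ≠ j, θs i ≠ θ0)
    -- the sequence q_n and its weak limit
    (qn : ℕ → Measure ℝ) (hqn_prob : ∀ n, IsProbabilityMeasure (qn n))
    (hqn_weak : WeakTendsto qn
      (Measure.sum fun i => ENNReal.ofReal (w i) • Measure.dirac (θs i))) :
    (0 : EReal) < ((2 * (1 - w j) ^ 2 : ℝ) : EReal) ∧
      ∀ᵐ ω ∂P, ((2 * (1 - w j) ^ 2 : ℝ) : EReal) ≤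
        Filter.liminf (fun n => renyiDivM α (postM n ω) (qn n)) atTop := by
  have hwj0 : 0 < w j := (hw j).1
  have hwj1 : w j < 1 := (hw j).2
  have hsummable : Summable w := by
    by_contra hs
    rw [tsum_eq_zero_of_not_summable hs] at hwsum
    norm_num at hwsum
  set M := Measure.sum (fun i => ENNReal.ofReal (w i) • Measure.dirac (θs i)) with hM
  haveI hMprob : IsProbabilityMeasure M := by
    constructor
    rw [hM, Measure.sum_apply _ MeasurableSet.univ]
    simp only [Measure.smul_apply, measure_univ, smul_eq_mul, mul_one]
    rw [← ENNReal.ofReal_tsum_of_nonneg (fun i => (hw i).1.le) hsummable, hwsum,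
      ENNReal.ofReal_one]
  constructor
  · apply EReal.coe_pos.mpr
    have h1 : 0 < 1 - w j := by linarith
    positivity
  filter_upwards [hpost_weak] with ω hω
  haveI : ∀ n, IsProbabilityMeasure (postM n ω) := fun n => hpost_prob n ω
  set L := Filter.liminf (fun n => renyiDivM α (postM n ω) (qn n)) atTop with hL
  have main : ∀ δ : ℝ, 0 < δ → δ ≤ 1/2 →
      ((α / (α - 1) * Real.log (1 - δ) - Real.log (w j + 2 * δ) : ℝ) : EReal) ≤ L := by
    intro δ hδ0 hδ12
    -- choose a finite set S of atoms capturing all but δ of the mass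
    have htail := tendsto_tsum_compl_atTop_zero w
    have h1 : ∀ᶠ s : Finset ℕ in atTop, ∑' i : {x // x ∉ s}, w i < δ :=
      htail.eventually_lt_const hδ0
    have h2 : ∀ᶠ s : Finset ℕ in atTop, {j} ≤ s := eventually_ge_atTop {j}
    obtain ⟨S, hStail, hSj'⟩ := (h1.and h2).exists
    have hSj : j ∈ S := Finset.singleton_subset_iff.mp hSj'
    -- choose a radius r separating θ0 from the other atoms of S
    obtain ⟨r, hr0, hrS⟩ : ∃ r : ℝ, 0 < r ∧ ∀ i ∈ S, i ≠ j → r ≤ dist (θs i) θ0 := by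
      by_cases hT : (S.erase j).Nonempty
      · refine ⟨(S.erase j).inf' hT (fun i => dist (θs i) θ0), ?_, ?_⟩
        · obtain ⟨i0, hi0, he⟩ := Finset.exists_mem_eq_inf' hT (fun i => dist (θs i) θ0)
          rw [he]
          exact dist_pos.mpr (hθne i0 (Finset.ne_of_mem_erase hi0))
        · intro i hi hij
          exact Finset.inf'_le _ (Finset.mem_erase.mpr ⟨hij, hi⟩)
      · refine ⟨1, one_pos, fun i hi hij => absurd (Finset.mem_erase.mpr ⟨hij, hi⟩) ?_⟩
        rw [Finset.not_nonempty_iff_eq_empty.mp hT]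
        simp
    have hr2 : 0 < r / 2 := by linarith
    set g := gBump θ0 r with hg
    set h := gBump θ0 (r / 2) with hh
    set A := Metric.closedBall θ0 (r / 2) with hA'
    have hA : MeasurableSet A := measurableSet_closedBall
    -- the mixture integral of g is at most w j + δ
    have hMg : ∫ x, g x ∂M = ∑' i, w i * g (θs i) := by
      rw [hM, integral_sum_measure (g.integrable M)]
      refine tsum_congr fun i => ?_
      rw [integral_smul_measure, integral_dirac, ENNReal.toReal_ofReal (hw i).1.le,
        smul_eq_mul]
    set v : ℕ → ℝ := fun i => if i = j then w j else 0 with hv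
    set t : ℕ → ℝ := fun i => if i ∈ S then 0 else w i with ht
    have hv_sum : HasSum v (w j) := hasSum_ite_eq j (w j)
    have ht_nonneg : ∀ i, 0 ≤ t i := by
      intro i; rw [ht]; dsimp only; split_ifs; exacts [le_refl 0, (hw i).1.le]
    have ht_le : ∀ i, t i ≤ w i := by
      intro i; rw [ht]; dsimp only; split_ifs; exacts [(hw i).1.le, le_refl _]
    have ht_sum : Summable t := Summable.of_nonneg_of_le ht_nonneg ht_le hsummable
    have hle : ∀ i, w i * g (θs i) ≤ v i + t i := by
      intro i
      by_cases hiS : i ∈ S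
      · by_cases hij : i = j
        · subst hij
          simp only [hv, ht, if_pos rfl, if_pos hiS, add_zero]
          calc w i * g (θs i) ≤ w i * 1 :=
                mul_le_mul_of_nonneg_left (gBump_le_one _ _ _) (hw i).1.le
            _ = w i := mul_one _
        · have hz : g (θs i) = 0 := gBump_eq_zero hr0 (hrS i hiS hij)
          simp [hv, ht, hij, hiS, hz]
      · have hij : i ≠ j := fun hc => hiS (hc ▸ hSj)
        simp only [hv, ht, if_neg hij, if_neg hiS, zero_add]
        calc w i * g (θs i) ≤ w i * 1 :=
              mul_le_mul_of_nonneg_left (gBump_le_one _ _ _) (hw i).1.le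
          _ = w i := mul_one _
    have hsum1 : Summable (fun i => w i * g (θs i)) := by
      refine Summable.of_nonneg_of_le
        (fun i => mul_nonneg (hw i).1.le (gBump_nonneg _ _ _)) (fun i => ?_) hsummable
      calc w i * g (θs i) ≤ w i * 1 :=
            mul_le_mul_of_nonneg_left (gBump_le_one _ _ _) (hw i).1.le
        _ = w i := mul_one _
    have ht_tail : ∑' i, t i ≤ δ := by
      have he : ∑' (i : {x // x ∉ S}), w i = ∑' i, t i := by
        have h1 : ∑' (i : {x // x ∉ S}), w i = ∑' i, Set.indicator {x | x ∉ S} w i :=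
          tsum_subtype {x | x ∉ S} w
        rw [h1]
        refine tsum_congr fun i => ?_
        rw [ht, Set.indicator_apply]
        dsimp only [Set.mem_setOf_eq]
        by_cases hiS : i ∈ S <;> simp [hiS]
      linarith [hStail, he ▸ hStail]
    have hMg_le : ∫ x, g x ∂M ≤ w j + δ := by
      rw [hMg]
      calc ∑' i, w i * g (θs i) ≤ ∑' i, (v i + t i) :=
            Summable.tsum_le_tsum hle hsum1 (hv_sum.summable.add ht_sum)
        _ = ∑' i, v i + ∑' i, t i := Summable.tsum_add hv_sum.summable ht_sum
        _ = w j + ∑' i, t i := by rw [hv_sum.tsum_eq]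
        _ ≤ w j + δ := by linarith
    -- eventual bound for qn
    have hq_ev : ∀ᶠ n in atTop, ((qn n) A).toReal ≤ w j + 2 * δ := by
      have hconv := hqn_weak g
      have h' : ∀ᶠ n in atTop, ∫ x, g x ∂(qn n) < w j + 2 * δ :=
        hconv.eventually_lt_const (by linarith)
      filter_upwards [h'] with n hn
      haveI := hqn_prob n
      have hind : ∫ x, A.indicator (fun _ => (1:ℝ)) x ∂(qn n) = ((qn n) A).toReal := by
        rw [integral_indicator_const (1:ℝ) hA, smul_eq_mul, mul_one, measureReal_def]
      have hmono : ∫ x, A.indicator (fun _ => (1:ℝ)) x ∂(qn n) ≤ ∫ x, g x ∂(qn n) := by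
        refine integral_mono ((integrable_const (1:ℝ)).indicator hA) (g.integrable _)
          fun x => ?_
        by_cases hx : x ∈ A
        · rw [Set.indicator_of_mem hx]
          exact le_of_eq (gBump_eq_one hr0 (Metric.mem_closedBall.mp hx)).symm
        · rw [Set.indicator_of_notMem hx]
          exact gBump_nonneg _ _ _
      rw [← hind]
      linarith
    -- eventual bound for the posterior
    have hp_ev : ∀ᶠ n in atTop, 1 - δ ≤ ((postM n ω) A).toReal := by
      have hconv := hω h
      rw [integral_dirac] at hconv
      have hone : h θ0 = 1 := gBump_eq_one hr2 (by simp [dist_self]; linarith)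
      rw [hone] at hconv
      have h' : ∀ᶠ n in atTop, 1 - δ < ∫ x, h x ∂(postM n ω) :=
        hconv.eventually_const_lt (by linarith)
      filter_upwards [h'] with n hn
      have hind : ∫ x, A.indicator (fun _ => (1:ℝ)) x ∂(postM n ω)
          = ((postM n ω) A).toReal := by
        rw [integral_indicator_const (1:ℝ) hA, smul_eq_mul, mul_one, measureReal_def]
      have hmono : ∫ x, h x ∂(postM n ω)
          ≤ ∫ x, A.indicator (fun _ => (1:ℝ)) x ∂(postM n ω) := by
        refine integral_mono (h.integrable _) ((integrable_const (1:ℝ)).indicator hA)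
          fun x => ?_
        by_cases hx : x ∈ A
        · rw [Set.indicator_of_mem hx]
          exact gBump_le_one _ _ _
        · rw [Set.indicator_of_notMem hx]
          refine le_of_eq (gBump_eq_zero hr2 ?_)
          have := Metric.mem_closedBall.not.mp hx
          linarith [not_le.mp this]
      rw [← hind]
      linarith
    -- apply the Rényi lower bound
    have hev : ∀ᶠ n in atTop,
        ((α / (α - 1) * Real.log (1 - δ) - Real.log (w j + 2 * δ) : ℝ) : EReal) ≤
          renyiDivM α (postM n ω) (qn n) := by
      filter_upwards [hp_ev, hq_ev] with n h1 h2
      haveI := hqn_prob n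
      exact renyi_lb α hα _ _ A hA (1 - δ) (w j + 2 * δ) (by linarith) h1 h2
    exact le_liminf_of_le (by isBoundedDefault) hev
  -- take δ → 0 along δ_k = 1/(k+2)
  set dk : ℕ → ℝ := fun k => 1 / (k + 2) with hdk
  have hdk0 : ∀ k, 0 < dk k := fun k => by rw [hdk]; positivity
  have hdk12 : ∀ k, dk k ≤ 1 / 2 := by
    intro k
    rw [hdk]
    apply one_div_le_one_div_of_le (by norm_num)
    have : (0:ℝ) ≤ (k:ℝ) := Nat.cast_nonneg k
    linarith
  set b : ℕ → ℝ := fun k =>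
    α / (α - 1) * Real.log (1 - dk k) - Real.log (w j + 2 * dk k) with hb
  have hbk : ∀ k, (b k : EReal) ≤ L := fun k => main (dk k) (hdk0 k) (hdk12 k)
  have hδ : Tendsto dk atTop (𝓝 0) := by
    have h2 := (tendsto_one_div_add_atTop_nhds_zero_nat (𝕜 := ℝ)).comp (tendsto_add_atTop_nat 1)
    refine Tendsto.congr (fun k => ?_) h2
    rw [hdk]
    dsimp [Function.comp]
    push_cast
    ring_nf
  have btend : Tendsto b atTop (𝓝 (-Real.log (w j))) := by
    have t1 : Tendsto (fun k => Real.log (1 - dk k)) atTop (𝓝 0) := by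
      have hh1 : Tendsto (fun k => 1 - dk k) atTop (𝓝 1) := by
        simpa using hδ.const_sub 1
      have := ((Real.continuousAt_log (by norm_num : (1:ℝ) ≠ 0)).tendsto).comp hh1
      simpa [Function.comp_def] using this
    have t2 : Tendsto (fun k => Real.log (w j + 2 * dk k)) atTop (𝓝 (Real.log (w j))) := by
      have hh2 : Tendsto (fun k => w j + 2 * dk k) atTop (𝓝 (w j)) := by
        simpa [hdk] using (hδ.const_mul 2).const_add (w j)
      exact ((Real.continuousAt_log hwj0.ne').tendsto).comp hh2
    have := (t1.const_mul (α / (α - 1))).sub t2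
    simpa using this
  have hlimL : ((-Real.log (w j) : ℝ) : EReal) ≤ L :=
    le_of_tendsto (EReal.tendsto_coe.mpr btend) (Filter.Eventually.of_forall hbk)
  refine le_trans ?_ hlimL
  apply EReal.coe_le_coe_iff.mpr
  have := two_sq_le_neg_log hwj0 hwj1.le
  linarith
end

section
/- Fix α > 1, σ > 0, n ≥ 1 and k ∈ ℝ. Let π(μ) = √((n+1)/(2πσ²)) exp(−((n+1)/(2σ²))(μ−k)²) be the density of N(k, σ²/(n+1)), and let q_n(μ) = (1/(2b_n)) exp(−|μ−k|/b_n) be the Laplace density with location k and scale b_n = √(π α^{1/(α−1)} σ²/(2n)). Then the ratio is uniformly bounded by a constant depending only on α: π(μ)/q_n(μ) ≤ √(2 α^{1/(α−1)}) e^{1/2} for all μ ∈ ℝ and all n ≥ 1. (The proof uses the elementary inequality e^{−(x²/2 − |x|)} ≤ e^{1/2}.) -/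
open MeasureTheory Real

lemma quad_aux (a u : ℝ) (ha : 1 / 2 ≤ a) (hu : 0 ≤ u) : u ≤ 1 / 2 + a * u ^ 2 := by
  nlinarith [sq_nonneg (u - 1), mul_nonneg (by linarith : (0:ℝ) ≤ a - 1 / 2) (sq_nonneg u)]

/-- Example 2 (Laplace variational family): the ratio of the `N(k, σ²/(n+1))` density to
the Laplace density with location `k` and scale `b_n = √(π α^{1/(α-1)} σ²/(2n))` is
uniformly bounded by `√(2 α^{1/(α-1)}) e^{1/2}`. -/
theorem gaussian_laplace_ratio_bound
    (α σ : ℝ) (hα : 1 < α) (hσ : 0 < σ) (k : ℝ) (n : ℕ) (hn : 1 ≤ n)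
    (bn : ℝ) (hbn : bn = Real.sqrt (Real.pi * α ^ ((1 : ℝ) / (α - 1)) * σ ^ 2 / (2 * n)))
    (post qn : ℝ → ℝ)
    (hpost : ∀ μ, post μ =
      Real.sqrt (((n : ℝ) + 1) / (2 * Real.pi * σ ^ 2)) *
        Real.exp (-(((n : ℝ) + 1) / (2 * σ ^ 2)) * (μ - k) ^ 2))
    (hqn : ∀ μ, qn μ = 1 / (2 * bn) * Real.exp (-|μ - k| / bn)) :
    ∀ μ : ℝ, post μ / qn μ ≤
      Real.sqrt (2 * α ^ ((1 : ℝ) / (α - 1))) * Real.exp (1 / 2) := by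
  intro μ
  have hπ := Real.pi_pos
  have hπ3 := Real.pi_gt_three
  set A := α ^ ((1 : ℝ) / (α - 1)) with hAdef
  have hA : (1:ℝ) ≤ A := Real.one_le_rpow hα.le (div_nonneg (by norm_num) (by linarith))
  have hn1 : (1:ℝ) ≤ (n:ℝ) := by exact_mod_cast hn
  have hnpos : (0:ℝ) < (n:ℝ) := by linarith
  have harg : 0 ≤ Real.pi * A * σ ^ 2 / (2 * n) := by positivity
  have hbn2 : bn ^ 2 = Real.pi * A * σ ^ 2 / (2 * n) := by
    rw [hbn, Real.sq_sqrt harg]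
  have hbnpos : 0 < bn := by
    rw [hbn]; exact Real.sqrt_pos.mpr (by positivity)
  have hqnpos : 0 < qn μ := by rw [hqn μ]; positivity
  rw [div_le_iff₀ hqnpos, hpost μ, hqn μ]
  set t := μ - k with ht
  set C := ((n : ℝ) + 1) / (2 * Real.pi * σ ^ 2) with hCdef
  set c := ((n : ℝ) + 1) / (2 * σ ^ 2) with hcdef
  have hCpos : 0 < C := by rw [hCdef]; positivity
  -- prefactor bound
  have key : C * (2 * bn) ^ 2 ≤ 2 * A := by
    have h4 : (2 * bn) ^ 2 = 4 * (Real.pi * A * σ ^ 2 / (2 * n)) := by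
      rw [mul_pow, hbn2]; ring
    rw [hCdef, h4]
    have hne : (n:ℝ) ≠ 0 := ne_of_gt hnpos
    have hπne : Real.pi ≠ 0 := ne_of_gt hπ
    have hσne : σ ≠ 0 := ne_of_gt hσ
    rw [div_mul_eq_mul_div, div_le_iff₀ (by positivity)]
    have hexpand : ((n:ℝ) + 1) * (4 * (Real.pi * A * σ ^ 2 / (2 * n))) * (n:ℝ)
        = ((n:ℝ) + 1) * (2 * (Real.pi * A * σ ^ 2)) := by
      field_simp; ring
    have h2n : ((n:ℝ) + 1) * (2 * (Real.pi * A * σ ^ 2)) ≤ 2 * A * (2 * Real.pi * σ ^ 2) * (n:ℝ) := by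
      nlinarith [mul_pos hπ (mul_pos (lt_of_lt_of_le one_pos hA) (mul_pos hσ hσ)), sq_nonneg σ]
    nlinarith [mul_pos hπ (mul_pos (lt_of_lt_of_le one_pos hA) (pow_pos hσ 2))]
  have hpre : Real.sqrt C ≤ Real.sqrt (2 * A) / (2 * bn) := by
    rw [le_div_iff₀ (by positivity)]
    have h1 : Real.sqrt C * (2 * bn) = Real.sqrt (C * (2 * bn) ^ 2) := by
      rw [Real.sqrt_mul hCpos.le, Real.sqrt_sq (by positivity)]
    rw [h1]
    exact Real.sqrt_le_sqrt key
  -- exponent bound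
  have ha : (1:ℝ) / 2 ≤ c * bn ^ 2 := by
    rw [hcdef, hbn2]
    have hne : (n:ℝ) ≠ 0 := ne_of_gt hnpos
    have hσne : σ ≠ 0 := ne_of_gt hσ
    rw [div_mul_div_comm, le_div_iff₀ (by positivity)]
    have hπA : (3:ℝ) ≤ Real.pi * A := by nlinarith
    have h1 : 3 * σ ^ 2 ≤ Real.pi * A * σ ^ 2 :=
      mul_le_mul_of_nonneg_right hπA (pow_pos hσ 2).le
    nlinarith [mul_le_mul_of_nonneg_left h1 (by linarith : (0:ℝ) ≤ (n:ℝ) + 1),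
      mul_pos hnpos (pow_pos hσ 2)]
  have hexp : -c * t ^ 2 ≤ 1 / 2 + -|t| / bn := by
    have hbne : bn ≠ 0 := ne_of_gt hbnpos
    have h1 : |t| / bn ≤ 1 / 2 + (c * bn ^ 2) * (|t| / bn) ^ 2 :=
      quad_aux _ _ ha (div_nonneg (abs_nonneg t) hbnpos.le)
    have h2 : (c * bn ^ 2) * (|t| / bn) ^ 2 = c * t ^ 2 := by
      rw [div_pow, sq_abs]; field_simp
    rw [h2] at h1
    rw [neg_div]
    linarith
  have h2 : Real.exp (-c * t ^ 2) ≤ Real.exp (1 / 2) * Real.exp (-|t| / bn) := by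
    rw [← Real.exp_add]
    exact Real.exp_le_exp.mpr hexp
  calc Real.sqrt C * Real.exp (-c * t ^ 2)
      ≤ (Real.sqrt (2 * A) / (2 * bn)) * (Real.exp (1 / 2) * Real.exp (-|t| / bn)) := by
        apply mul_le_mul hpre h2 (Real.exp_pos _).le (by positivity)
    _ = Real.sqrt (2 * A) * Real.exp (1 / 2) * (1 / (2 * bn) * Real.exp (-|t| / bn)) := by
        ring
end

section
/- Fix α > 1, σ > 0, n ≥ 1 and k ∈ ℝ. Let π(μ) = √((n+1)/(2πσ²)) exp(−((n+1)/(2σ²))(μ−k)²) be the density of N(k, σ²/(n+1)), and let q_n(μ) = (1/s_n)(e^{(μ−k)/(2s_n)} + e^{−(μ−k)/(2s_n)})^{−2} be the logistic density with mean k and scale s_n = √(2π α^{1/(α−1)} σ²/(n+1)). Then there is a constant C(α) < ∞ depending only on α (one may take C(α) = 4 √(α^{1/(α−1)}) e^{1/(4π α^{1/(α−1)})}) such that π(μ)/q_n(μ) ≤ C(α) for all μ ∈ ℝ and all n ≥ 1. -/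
open MeasureTheory Real

/-- Example 2 (logistic variational family): the ratio of the `N(k, σ²/(n+1))` density to
the logistic density with mean `k` and scale `s_n = √(2π α^{1/(α-1)} σ²/(n+1))` is
bounded by a constant depending only on `α`; one may take
`C(α) = 4 √(α^{1/(α-1)}) e^{1/(4π α^{1/(α-1)})}`. -/
theorem gaussian_logistic_ratio_bound
    (α : ℝ) (hα : 1 < α) :
    ∃ C : ℝ,
      C = 4 * Real.sqrt (α ^ ((1 : ℝ) / (α - 1))) *
        Real.exp (1 / (4 * Real.pi * α ^ ((1 : ℝ) / (α - 1)))) ∧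
      ∀ σ : ℝ, 0 < σ → ∀ k : ℝ, ∀ n : ℕ, 1 ≤ n →
        ∀ sn : ℝ, sn = Real.sqrt (2 * Real.pi * α ^ ((1 : ℝ) / (α - 1)) * σ ^ 2 / ((n : ℝ) + 1)) →
        ∀ post qn : ℝ → ℝ,
          (∀ μ, post μ =
            Real.sqrt (((n : ℝ) + 1) / (2 * Real.pi * σ ^ 2)) *
              Real.exp (-(((n : ℝ) + 1) / (2 * σ ^ 2)) * (μ - k) ^ 2)) →
          (∀ μ, qn μ =
            1 / sn * (Real.exp ((μ - k) / (2 * sn)) + Real.exp (-(μ - k) / (2 * sn)))⁻¹ ^ 2) →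
          ∀ μ : ℝ, post μ / qn μ ≤ C := by
  set a := α ^ ((1 : ℝ) / (α - 1)) with ha_def
  have ha : 0 < a := Real.rpow_pos_of_pos (by linarith) _
  refine ⟨_, rfl, ?_⟩
  intro σ hσ k n hn sn hsn post qn hpost hqn μ
  have hπ := Real.pi_pos
  have hn1 : (0:ℝ) < (n:ℝ) + 1 := by positivity
  have harg : 0 < 2 * Real.pi * a * σ ^ 2 / ((n : ℝ) + 1) := by positivity
  have hsn_pos : 0 < sn := hsn ▸ Real.sqrt_pos.2 harg
  have hsn_sq : sn ^ 2 = 2 * Real.pi * a * σ ^ 2 / ((n : ℝ) + 1) := by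
    rw [hsn, Real.sq_sqrt harg.le]
  set d := μ - k with hd
  set t := d / (2 * sn) with ht
  set X := Real.exp (d / (2 * sn)) + Real.exp (-d / (2 * sn)) with hX
  have hXpos : 0 < X := by positivity
  have hratio : post μ / qn μ =
      (Real.sqrt (((n:ℝ)+1)/(2*Real.pi*σ^2)) * sn) *
        (Real.exp (-(((n:ℝ)+1)/(2*σ^2)) * d^2) * X^2) := by
    rw [hpost, hqn, ← hd, ← hX, one_div, inv_pow, ← mul_inv, div_inv_eq_mul]
    ring
  have hsa : Real.sqrt (((n:ℝ)+1)/(2*Real.pi*σ^2)) * sn = Real.sqrt a := by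
    rw [hsn, ← Real.sqrt_mul (by positivity)]
    congr 1
    field_simp
  have hd2 : d ^ 2 = 4 * sn ^ 2 * t ^ 2 := by
    have : d = t * (2 * sn) := by
      rw [ht]; field_simp
    rw [this]; ring
  have hv : ((n:ℝ)+1)/(2*σ^2) * d^2 = 4 * Real.pi * a * t^2 := by
    rw [hd2, hsn_sq]; field_simp
  have hXle : X ≤ 2 * Real.exp |t| := by
    have h1 : Real.exp (d / (2*sn)) ≤ Real.exp |t| :=
      Real.exp_le_exp.2 (by rw [← ht]; exact le_abs_self t)
    have h2 : Real.exp (-d / (2*sn)) ≤ Real.exp |t| := by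
      apply Real.exp_le_exp.2
      have : -d / (2*sn) = -t := by rw [ht]; ring
      rw [this]
      exact neg_le_abs t
    calc X ≤ Real.exp |t| + Real.exp |t| := add_le_add h1 h2
      _ = 2 * Real.exp |t| := by ring
  have hX2 : X ^ 2 ≤ 4 * Real.exp (2 * |t|) := by
    calc X ^ 2 ≤ (2 * Real.exp |t|) ^ 2 := by
          apply pow_le_pow_left₀ hXpos.le hXle
      _ = 4 * Real.exp (2 * |t|) := by
          rw [show (2:ℝ) * |t| = |t| + |t| by ring, Real.exp_add]; ring
  have hkey : 2 * |t| - 4 * Real.pi * a * t ^ 2 ≤ 1 / (4 * Real.pi * a) := by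
    have hb : 0 < Real.pi * a := mul_pos hπ ha
    have h1 : t ^ 2 = |t| ^ 2 := (sq_abs t).symm
    rw [h1, le_div_iff₀ (by positivity : (0:ℝ) < 4 * Real.pi * a)]
    nlinarith [sq_nonneg (4 * Real.pi * a * |t| - 1), hb, abs_nonneg t]
  have hexp : Real.exp (-(((n:ℝ)+1)/(2*σ^2)) * d^2) * X^2 ≤
      4 * Real.exp (1 / (4 * Real.pi * a)) := by
    calc Real.exp (-(((n:ℝ)+1)/(2*σ^2)) * d^2) * X^2
        ≤ Real.exp (-(((n:ℝ)+1)/(2*σ^2)) * d^2) * (4 * Real.exp (2 * |t|)) := by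
          apply mul_le_mul_of_nonneg_left hX2 (Real.exp_nonneg _)
      _ = 4 * Real.exp (2 * |t| - 4 * Real.pi * a * t ^ 2) := by
          have hA : -(((n:ℝ)+1)/(2*σ^2)) * d^2 = -(4 * Real.pi * a * t^2) := by
            linarith [hv]
          rw [hA, show Real.exp (-(4 * Real.pi * a * t^2)) * (4 * Real.exp (2 * |t|)) =
            4 * (Real.exp (-(4 * Real.pi * a * t^2)) * Real.exp (2 * |t|)) from by ring,
            ← Real.exp_add]
          ring_nf
      _ ≤ 4 * Real.exp (1 / (4 * Real.pi * a)) := by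
          have := Real.exp_le_exp.2 hkey
          linarith
  calc post μ / qn μ = Real.sqrt a * (Real.exp (-(((n:ℝ)+1)/(2*σ^2)) * d^2) * X^2) := by
        rw [hratio, hsa]
    _ ≤ Real.sqrt a * (4 * Real.exp (1 / (4 * Real.pi * a))) := by
        apply mul_le_mul_of_nonneg_left hexp (Real.sqrt_nonneg a)
    _ = 4 * Real.sqrt a * Real.exp (1 / (4 * Real.pi * a)) := by ring
end
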